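/- arXiv:2202.04597 — 5 statements merged into one kernel-verified Lean document; each statement's English description precedes it below -/
import Mathlib

section
/- Every compact $(L_0,\rho_0)$-quasi-selfsimilar metric space is doubling: there exists $D$ such that every ball of radius $\rho$ contains at most $D$ points that are pairwise at distance greater than $\rho/2$. -/
/-- `Φ` witnesses quasi-selfsimilarity on the ball `B(x,ρ)`: it is `L0`-biLipschitz from
`(B(x,ρ), (ρ0/ρ)·d)` to `X` and its image contains `B(Φ x, ρ0/L0)`. -/
def QSSMap {X : Type*} [MetricSpace X] (L0 ρ0 : ℝ) (x : X) (ρ : ℝ) (Φ : X → X) : Prop :=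
  (∀ y ∈ Metric.ball x ρ, ∀ z ∈ Metric.ball x ρ,
    (ρ0 / ρ) * dist y z / L0 ≤ dist (Φ y) (Φ z) ∧
      dist (Φ y) (Φ z) ≤ L0 * ((ρ0 / ρ) * dist y z)) ∧
  Metric.ball (Φ x) (ρ0 / L0) ⊆ Φ '' (Metric.ball x ρ)

/-- A metric space is `(L0,ρ0)`-quasi-selfsimilar if every open ball of radius `0 < ρ ≤ ρ0`,
rescaled by `ρ0/ρ`, admits an `L0`-biLipschitz map to `X` whose image contains a ball
of radius `ρ0/L0`. -/
def QSS (X : Type*) [MetricSpace X] (L0 ρ0 : ℝ) : Prop :=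
  ∀ (x : X) (ρ : ℝ), 0 < ρ → ρ ≤ ρ0 → ∃ Φ : X → X, QSSMap L0 ρ0 x ρ Φ

/-- A metric space is `D`-doubling if any `ρ/2`-separated subset of a ball of radius `ρ`
has at most `D` elements. -/
def Doubling (X : Type*) [MetricSpace X] (D : ℕ) : Prop :=
  ∀ (x : X) (ρ : ℝ) (S : Finset X), (↑S : Set X) ⊆ Metric.ball x ρ →
    (∀ a ∈ S, ∀ b ∈ S, a ≠ b → ρ / 2 < dist a b) → S.card ≤ D

/-- A metric space is `a`-uniformly perfect if `closedBall x ρ \ ball x (a*ρ)` is nonempty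
for every `x` and every `0 ≤ ρ < Diam X`. -/
def UniformlyPerfect (X : Type*) [MetricSpace X] (a : ℝ) : Prop :=
  ∀ x : X, ∀ ρ : ℝ, 0 ≤ ρ → ρ < Metric.diam (Set.univ : Set X) →
    (Metric.closedBall x ρ \ Metric.ball x (a * ρ)).Nonempty

/-- In a compact space, any `r`-separated finset has bounded cardinality. -/
lemma bound_sep (X : Type*) [MetricSpace X] [CompactSpace X] (r : ℝ) (hr : 0 < r) :
    ∃ N : ℕ, ∀ S : Finset X, (∀ a ∈ S, ∀ b ∈ S, a ≠ b → r < dist a b) → S.card ≤ N := by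
  classical
  obtain ⟨t, ht, hcov⟩ :=
    (Metric.totallyBounded_iff.mp (isCompact_univ (X := X)).totallyBounded) (r / 2)
      (by linarith)
  refine ⟨ht.toFinset.card, fun S hS => ?_⟩
  have hmem : ∀ a : X, ∃ y ∈ t, a ∈ Metric.ball y (r / 2) := by
    intro a
    have := hcov (Set.mem_univ a)
    simpa using this
  choose f hf1 hf2 using hmem
  apply Finset.card_le_card_of_injOn f
  · intro a _
    simpa [Set.Finite.mem_toFinset] using hf1 a
  · intro a ha b hb hab
    by_contra hne
    have h1 := hS a ha b hb hne
    have t1 : dist a (f a) < r / 2 := Metric.mem_ball.mp (hf2 a)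
    have t2 : dist b (f b) < r / 2 := Metric.mem_ball.mp (hf2 b)
    have t3 : dist a b ≤ dist a (f a) + dist (f a) b := dist_triangle _ _ _
    have t4 : dist (f a) b = dist b (f b) := by rw [hab, dist_comm]
    linarith

/-- Every compact `(L0,ρ0)`-quasi-selfsimilar metric space is doubling. -/
theorem qss_doubling (X : Type*) [MetricSpace X] [CompactSpace X]
    (L0 ρ0 : ℝ) (hL0 : 1 ≤ L0) (hρ0 : 0 < ρ0) (hqss : QSS X L0 ρ0) :
    ∃ D : ℕ, Doubling X D := by
  classical
  have hL0' : (0 : ℝ) < L0 := lt_of_lt_of_le one_pos hL0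
  obtain ⟨N1, hN1⟩ := bound_sep X (ρ0 / (2 * L0)) (by positivity)
  obtain ⟨N2, hN2⟩ := bound_sep X (ρ0 / 2) (by positivity)
  refine ⟨max N1 N2, fun x ρ S hS hsep => ?_⟩
  rcases le_or_gt ρ 0 with hρ | hρ
  · have hSe : S = ∅ := by
      rcases Finset.eq_empty_or_nonempty S with h | ⟨a, ha⟩
      · exact h
      · have := hS (Finset.mem_coe.mpr ha)
        rw [Metric.ball_eq_empty.mpr hρ] at this
        exact absurd this (Set.notMem_empty a)
    simp [hSe]
  rcases le_or_gt ρ ρ0 with hρ0' | hρ0'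
  · obtain ⟨Φ, hbi, -⟩ := hqss x ρ hρ hρ0'
    have hinj : Set.InjOn Φ (S : Set X) := by
      intro a ha b hb hab
      by_contra hne
      have h1 := (hbi a (hS ha) b (hS hb)).1
      have h2 := hsep a ha b hb hne
      rw [hab, dist_self] at h1
      have hpos : 0 < ρ0 / ρ * dist a b / L0 := by
        have : 0 < dist a b := by linarith
        positivity
      linarith
    have hcard : S.card = (S.image Φ).card := (Finset.card_image_of_injOn hinj).symm
    refine le_trans ?_ (le_max_left N1 N2)
    rw [hcard]
    apply hN1
    intro u hu v hv huv
    simp only [Finset.mem_image] at hu hv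
    obtain ⟨a, ha, rfl⟩ := hu
    obtain ⟨b, hb, rfl⟩ := hv
    have hne : a ≠ b := fun h => huv (by rw [h])
    have h1 := (hbi a (hS (Finset.mem_coe.mpr ha)) b (hS (Finset.mem_coe.mpr hb))).1
    have h2 := hsep a ha b hb hne
    have key : ρ0 / (2 * L0) < ρ0 / ρ * dist a b / L0 := by
      have heq : ρ0 / (2 * L0) = ρ0 / ρ * (ρ / 2) / L0 := by
        field_simp
      rw [heq]
      gcongr
    linarith
  · refine le_trans (hN2 S fun a ha b hb hne => ?_) (le_max_right _ _)
    have := hsep a ha b hb hne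
    linarith
end

section
/- Every compact perfect $(L_0,\rho_0)$-quasi-selfsimilar metric space is uniformly perfect: there exists $a \in (0,1)$ such that $\overline{B}(x,\rho) \setminus B(x, a\rho) \neq \emptyset$ for every $x$ and every $0 \leq \rho < \mathrm{Diam}(X)$. -/
/-- In a compact perfect metric space, there is a uniform `c > 0` such that every point
has a companion at distance between `c` and `r`. -/
lemma exists_uniform_sep {X : Type*} [MetricSpace X] [CompactSpace X] [Nonempty X]
    (hperf : ∀ x : X, Filter.NeBot (nhdsWithin x {x}ᶜ)) (r : ℝ) (hr : 0 < r) :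
    ∃ c : ℝ, 0 < c ∧ ∀ z : X, ∃ w : X, c ≤ dist z w ∧ dist z w ≤ r := by
  have hex : ∀ z : X, ∃ w : X, 0 < dist z w ∧ dist z w < r / 2 := by
    intro z
    have h1 : Metric.ball z (r / 2) ∩ {z}ᶜ ∈ nhdsWithin z {z}ᶜ :=
      Filter.inter_mem (mem_nhdsWithin_of_mem_nhds (Metric.ball_mem_nhds z (by linarith)))
        self_mem_nhdsWithin
    obtain ⟨w, hw1, hw2⟩ := (hperf z).nonempty_of_mem h1
    refine ⟨w, ?_, ?_⟩
    · rw [dist_pos]; exact fun h => hw2 h.symm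
    · rw [dist_comm]; exact hw1
  choose w hw1 hw2 using hex
  obtain ⟨t, ht⟩ := isCompact_univ.elim_finite_subcover
    (fun z : X => Metric.ball z (dist z (w z) / 2)) (fun z => Metric.isOpen_ball)
    (fun p _ => Set.mem_iUnion.2 ⟨p, Metric.mem_ball_self (by linarith [hw1 p])⟩)
  have htne : t.Nonempty := by
    obtain ⟨i, hit, -⟩ := Set.mem_iUnion₂.1 (ht (Set.mem_univ (Classical.arbitrary X)))
    exact ⟨i, hit⟩
  refine ⟨t.inf' htne (fun z => dist z (w z) / 2), ?_, ?_⟩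
  · rw [Finset.lt_inf'_iff]
    exact fun i _ => by linarith [hw1 i]
  · intro p
    obtain ⟨i, hit, hpi⟩ := Set.mem_iUnion₂.1 (ht (Set.mem_univ p))
    have hpi' : dist p i < dist i (w i) / 2 := Metric.mem_ball.1 hpi
    refine ⟨w i, ?_, ?_⟩
    · have h1 : dist i (w i) ≤ dist i p + dist p (w i) := dist_triangle _ _ _
      have h2 : t.inf' htne (fun z => dist z (w z) / 2) ≤ dist i (w i) / 2 :=
        Finset.inf'_le _ hit
      rw [dist_comm] at hpi'
      linarith
    · have h1 : dist p (w i) ≤ dist p i + dist i (w i) := dist_triangle _ _ _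
      have := hw2 i
      linarith

/-- Every compact perfect `(L0,ρ0)`-quasi-selfsimilar metric space is uniformly perfect. -/
theorem qss_perfect_uniformlyPerfect (X : Type*) [MetricSpace X] [CompactSpace X]
    (hperf : ∀ x : X, Filter.NeBot (nhdsWithin x {x}ᶜ))
    (L0 ρ0 : ℝ) (hL0 : 1 ≤ L0) (hρ0 : 0 < ρ0) (hqss : QSS X L0 ρ0) :
    ∃ a : ℝ, 0 < a ∧ a < 1 ∧ UniformlyPerfect X a := by
  have hL0' : 0 < L0 := lt_of_lt_of_le one_pos hL0
  rcases isEmpty_or_nonempty X with hX | hX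
  · exact ⟨1/2, by norm_num, by norm_num, fun x => (IsEmpty.false x).elim⟩
  set D := Metric.diam (Set.univ : Set X) with hDdef
  set r := min D (ρ0 / L0) / 2 with hrdef
  -- D > 0
  have hD : 0 < D := by
    obtain ⟨x0⟩ := hX
    have h1 : Metric.ball x0 1 ∩ {x0}ᶜ ∈ nhdsWithin x0 {x0}ᶜ :=
      Filter.inter_mem (mem_nhdsWithin_of_mem_nhds (Metric.ball_mem_nhds x0 one_pos))
        self_mem_nhdsWithin
    obtain ⟨w, -, hw2⟩ := (hperf x0).nonempty_of_mem h1
    have hd : 0 < dist x0 w := dist_pos.2 fun h => hw2 h.symm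
    exact lt_of_lt_of_le hd
      (Metric.dist_le_diam_of_mem isCompact_univ.isBounded trivial trivial)
  have hr : 0 < r := by
    have : 0 < ρ0 / L0 := div_pos hρ0 hL0'
    rw [hrdef]
    have := lt_min hD this
    linarith [lt_min hD this]
  obtain ⟨c, hc, hcw⟩ := exists_uniform_sep hperf r hr
  have hcr : c ≤ r := by
    obtain ⟨w, h1, h2⟩ := hcw (Classical.arbitrary X)
    linarith
  have hrρ0 : r ≤ ρ0 / L0 / 2 := by
    rw [hrdef]; exact div_le_div_of_nonneg_right (min_le_right _ _) (by norm_num)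
  -- key step for small radii
  have key : ∀ (x : X) (ρ : ℝ), 0 < ρ → ρ ≤ ρ0 →
      ∃ y : X, dist x y ≤ ρ ∧ c / (L0 * ρ0) * ρ ≤ dist x y := by
    intro x ρ hρ hρρ0
    obtain ⟨Φ, hbl, hsurj⟩ := hqss x ρ hρ hρρ0
    obtain ⟨v, hv1, hv2⟩ := hcw (Φ x)
    have hvball : v ∈ Metric.ball (Φ x) (ρ0 / L0) := by
      rw [Metric.mem_ball, dist_comm]
      have : 0 < ρ0 / L0 := div_pos hρ0 hL0'
      linarith
    obtain ⟨y, hy, hΦy⟩ := hsurj hvball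
    have hxball : x ∈ Metric.ball x ρ := Metric.mem_ball_self hρ
    have hub := (hbl x hxball y hy).2
    rw [hΦy] at hub
    have hxy : dist x y < ρ := Metric.mem_ball'.1 (Metric.mem_ball.1 hy) |>.trans_le le_rfl
    refine ⟨y, le_of_lt hxy, ?_⟩
    have h1 : c ≤ L0 * ((ρ0 / ρ) * dist x y) := le_trans hv1 hub
    rw [div_mul_eq_mul_div, div_le_iff₀ (by positivity)]
    have : L0 * ((ρ0 / ρ) * dist x y) = L0 * ρ0 * dist x y / ρ := by
      field_simp
    rw [this] at h1
    have h2 : c * ρ ≤ L0 * ρ0 * dist x y := by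
      rw [le_div_iff₀ hρ] at h1; linarith
    linarith
  set a1 := c / (L0 * ρ0) with ha1def
  have ha1 : 0 < a1 := div_pos hc (mul_pos hL0' hρ0)
  have ha1lt : a1 < 1 := by
    have h1 : c ≤ ρ0 / L0 / 2 := le_trans hcr hrρ0
    rw [ha1def, div_lt_one (mul_pos hL0' hρ0)]
    have h2 : ρ0 / L0 / 2 < L0 * ρ0 := by
      rw [div_div, div_lt_iff₀ (by positivity)]
      nlinarith [mul_le_mul hL0 hL0 zero_le_one (le_of_lt hL0'), hρ0,
        mul_pos hρ0 (mul_pos hL0' hL0')]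
    linarith
  refine ⟨min a1 (a1 * ρ0 / D), lt_min ha1 (by positivity), ?_, ?_⟩
  · exact lt_of_le_of_lt (min_le_left _ _) ha1lt
  intro x ρ hρ0le hρD
  rcases eq_or_lt_of_le hρ0le with hρeq | hρpos
  · refine ⟨x, ?_, ?_⟩
    · simp [← hρeq]
    · simp [← hρeq, Metric.mem_ball]
  rcases le_or_gt ρ ρ0 with hle | hgt
  · obtain ⟨y, hy1, hy2⟩ := key x ρ hρpos hle
    refine ⟨y, Metric.mem_closedBall'.2 hy1, ?_⟩
    rw [Metric.mem_ball, dist_comm, not_lt]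
    have : min a1 (a1 * ρ0 / D) * ρ ≤ a1 * ρ :=
      mul_le_mul_of_nonneg_right (min_le_left _ _) (le_of_lt hρpos)
    rw [ha1def] at this
    linarith
  · obtain ⟨y, hy1, hy2⟩ := key x ρ0 hρ0 le_rfl
    refine ⟨y, Metric.mem_closedBall'.2 (hy1.trans (le_of_lt hgt)), ?_⟩
    rw [Metric.mem_ball, dist_comm, not_lt]
    have h1 : min a1 (a1 * ρ0 / D) * ρ ≤ a1 * ρ0 / D * ρ :=
      mul_le_mul_of_nonneg_right (min_le_right _ _) (le_of_lt hρpos)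
    have h2 : a1 * ρ0 / D * ρ ≤ a1 * ρ0 := by
      have hρD' : ρ < D := hρD
      rw [div_mul_eq_mul_div, div_le_iff₀ hD]
      nlinarith [mul_pos ha1 hρ0, hρD']
    rw [ha1def] at h1
    have h3 : c / (L0 * ρ0) * ρ0 ≤ dist x y := hy2
    linarith
end

section
/- Let $\omega$ be a non-principal ultrafilter on $\mathbb{N}$ and let $(X_n, d_n)$ be a sequence of compact metric spaces, each $a_0$-uniformly perfect. If the ultralimit $(X_\omega, d_\omega)$ is compact, then $(X_\omega, d_\omega)$ is $a_0$-uniformly perfect. -/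
/-- `Z` together with `Φ` is (a realization of) the ultralimit of the sequence of metric
spaces `X n` with respect to the non-principal ultrafilter `ω`: `Φ` is surjective and the
distance of images is the `ω`-limit of the distances. -/
def IsUltralimit {X : ℕ → Type*} [∀ n, MetricSpace (X n)] (ω : Ultrafilter ℕ)
    (Z : Type*) [MetricSpace Z] (Φ : (∀ n, X n) → Z) : Prop :=
  Function.Surjective Φ ∧
    ∀ y y' : ∀ n, X n,
      Filter.Tendsto (fun n => dist (y n) (y' n)) ↑ω (nhds (dist (Φ y) (Φ y')))

/-- The compact ultralimit along a non-principal ultrafilter of a sequence of compact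
`a0`-uniformly perfect metric spaces is `a0`-uniformly perfect. -/
theorem ultralimit_uniformlyPerfect (a0 : ℝ) (ha0 : 0 < a0) (ha1 : a0 < 1)
    (X : ℕ → Type) [∀ n, MetricSpace (X n)] [∀ n, CompactSpace (X n)]
    (hup : ∀ n, UniformlyPerfect (X n) a0)
    (ω : Ultrafilter ℕ) (hω : (↑ω : Filter ℕ) ≤ Filter.cofinite)
    (Z : Type) [MetricSpace Z] [CompactSpace Z]
    (Φ : (∀ n, X n) → Z) (hΦ : IsUltralimit ω Z Φ) :
    UniformlyPerfect Z a0 := by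
  classical
  obtain ⟨hsurj, hdist⟩ := hΦ
  intro z ρ hρ0 hρd
  obtain ⟨y, rfl⟩ := hsurj z
  obtain ⟨u, v, huv⟩ : ∃ u v : Z, ρ < dist u v := by
    by_contra h
    push_neg at h
    exact absurd (Metric.diam_le_of_forall_dist_le hρ0 (fun a _ b _ => h a b)) (not_le.2 hρd)
  obtain ⟨p, rfl⟩ := hsurj u
  obtain ⟨q, rfl⟩ := hsurj v
  have hS : ∀ᶠ n in (↑ω : Filter ℕ), ρ < dist (p n) (q n) :=
    (hdist p q).eventually (eventually_gt_nhds huv)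
  have key : ∀ n, ρ < dist (p n) (q n) →
      ∃ w : X n, dist w (y n) ≤ ρ ∧ a0 * ρ ≤ dist w (y n) := by
    intro n hn
    have hdiam : ρ < Metric.diam (Set.univ : Set (X n)) :=
      hn.trans_le (Metric.dist_le_diam_of_mem isCompact_univ.isBounded trivial trivial)
    obtain ⟨w, hw1, hw2⟩ := hup n (y n) ρ hρ0 hdiam
    exact ⟨w, by simpa using hw1, by simpa [Metric.mem_ball, not_lt] using hw2⟩
  set w : ∀ n, X n := fun n => if h : ρ < dist (p n) (q n) then (key n h).choose else y n
    with hwdef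
  refine ⟨Φ w, Metric.mem_closedBall.2 (le_of_tendsto (hdist w y) ?_), ?_⟩
  · filter_upwards [hS] with n hn
    simp only [hwdef, dif_pos hn]
    exact (key n hn).choose_spec.1
  · intro hmem
    have hge : a0 * ρ ≤ dist (Φ w) (Φ y) := by
      refine ge_of_tendsto (hdist w y) ?_
      filter_upwards [hS] with n hn
      simp only [hwdef, dif_pos hn]
      exact (key n hn).choose_spec.2
    exact absurd (Metric.mem_ball.1 hmem) (not_lt.2 hge)
end

section
/- Let $\omega$ be a non-principal ultrafilter and $(X_n, d_n)$ a sequence of compact, $(L_0,\rho_0)$-quasi-selfsimilar metric spaces whose ultralimit $(X_\omega, d_\omega)$ is compact. Then $(X_\omega, d_\omega)$ is $(L_0, \rho_0)$-quasi-selfsimilar. -/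
/-- The compact ultralimit along a non-principal ultrafilter of a sequence of compact
`(L0,ρ0)`-quasi-selfsimilar metric spaces is `(L0,ρ0)`-quasi-selfsimilar. -/
theorem ultralimit_qss (L0 ρ0 : ℝ) (hL0 : 1 ≤ L0) (hρ0 : 0 < ρ0)
    (X : ℕ → Type) [∀ n, MetricSpace (X n)] [∀ n, CompactSpace (X n)]
    (hqss : ∀ n, QSS (X n) L0 ρ0)
    (ω : Ultrafilter ℕ) (hω : (↑ω : Filter ℕ) ≤ Filter.cofinite)
    (Z : Type) [MetricSpace Z] [CompactSpace Z]
    (Φ : (∀ n, X n) → Z) (hΦ : IsUltralimit ω Z Φ) :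
    QSS Z L0 ρ0 := by
  classical
  obtain ⟨hsurj, hdist⟩ := hΦ
  have hL0' : (0 : ℝ) < L0 := lt_of_lt_of_le one_pos hL0
  set p : Z → (∀ n, X n) := Function.surjInv hsurj with hpdef
  have hp : ∀ z, Φ (p z) = z := fun z => Function.surjInv_eq hsurj z
  intro x ρ hρ hρρ0
  have hratio : (0 : ℝ) < ρ0 / ρ := div_pos hρ0 hρ
  choose Φn hΦn using fun n => hqss n (p x n) ρ hρ hρρ0
  set Ψ : Z → Z := fun z => Φ (fun n => Φn n (p z n)) with hΨdef
  -- for z in the ball, eventually the approximants are in the ball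
  have ballmem : ∀ z ∈ Metric.ball x ρ, ∀ᶠ n in (ω : Filter ℕ),
      p z n ∈ Metric.ball (p x n) ρ := by
    intro z hz
    have h1 : Filter.Tendsto (fun n => dist (p z n) (p x n)) ↑ω (nhds (dist z x)) := by
      have := hdist (p z) (p x); rwa [hp, hp] at this
    have hz' : dist z x < ρ := Metric.mem_ball.1 hz
    exact (h1.eventually_lt_const hz').mono fun n hn => Metric.mem_ball.2 hn
  refine ⟨Ψ, ?_, ?_⟩
  · -- biLipschitz on the ball
    intro y hy z hz
    have h1 : Filter.Tendsto (fun n => dist (p y n) (p z n)) ↑ω (nhds (dist y z)) := by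
      have := hdist (p y) (p z); rwa [hp, hp] at this
    have h2 : Filter.Tendsto (fun n => dist (Φn n (p y n)) (Φn n (p z n))) ↑ω
        (nhds (dist (Ψ y) (Ψ z))) :=
      hdist (fun n => Φn n (p y n)) (fun n => Φn n (p z n))
    have hev := (ballmem y hy).and (ballmem z hz)
    have hlow : ∀ᶠ n in (ω : Filter ℕ),
        (ρ0 / ρ) * dist (p y n) (p z n) / L0 ≤ dist (Φn n (p y n)) (Φn n (p z n)) :=
      hev.mono fun n hn => ((hΦn n).1 _ hn.1 _ hn.2).1
    have hup : ∀ᶠ n in (ω : Filter ℕ),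
        dist (Φn n (p y n)) (Φn n (p z n)) ≤ L0 * ((ρ0 / ρ) * dist (p y n) (p z n)) :=
      hev.mono fun n hn => ((hΦn n).1 _ hn.1 _ hn.2).2
    constructor
    · exact le_of_tendsto_of_tendsto ((h1.const_mul (ρ0 / ρ)).div_const L0) h2 hlow
    · exact le_of_tendsto_of_tendsto h2 ((h1.const_mul (ρ0 / ρ)).const_mul L0) hup
  · -- image contains the ball
    intro w hw
    have hw' : dist w (Ψ x) < ρ0 / L0 := Metric.mem_ball.1 hw
    have h1 : Filter.Tendsto (fun n => dist (p w n) (Φn n (p x n))) ↑ω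
        (nhds (dist w (Ψ x))) := by
      have := hdist (p w) (fun n => Φn n (p x n)); rwa [hp] at this
    have hS : ∀ᶠ n in (ω : Filter ℕ),
        ∃ v ∈ Metric.ball (p x n) ρ, Φn n v = p w n := by
      refine (h1.eventually_lt_const hw').mono fun n hn => ?_
      obtain ⟨v, hv, hveq⟩ := (hΦn n).2 (Metric.mem_ball.2 hn)
      exact ⟨v, hv, hveq⟩
    set v : ∀ n, X n := fun n =>
      if h : ∃ v ∈ Metric.ball (p x n) ρ, Φn n v = p w n then h.choose else p x n with hvdef
    have hv : ∀ᶠ n in (ω : Filter ℕ),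
        v n ∈ Metric.ball (p x n) ρ ∧ Φn n (v n) = p w n := by
      refine hS.mono fun n hn => ?_
      simp only [hvdef, dif_pos hn]
      exact hn.choose_spec
    -- Φ v is in the ball
    have h2 : Filter.Tendsto (fun n => dist (v n) (p x n)) ↑ω (nhds (dist (Φ v) x)) := by
      have := hdist v (p x); rwa [hp] at this
    have hDle : (ρ0 / ρ) * dist (Φ v) x / L0 ≤ dist w (Ψ x) := by
      refine le_of_tendsto_of_tendsto ((h2.const_mul (ρ0 / ρ)).div_const L0) h1 ?_
      refine hv.mono fun n hn => ?_
      have := ((hΦn n).1 _ hn.1 _ (Metric.mem_ball_self hρ)).1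
      rwa [hn.2] at this
    have hball : Φ v ∈ Metric.ball x ρ := by
      have h3 : (ρ0 / ρ) * dist (Φ v) x / L0 < ρ0 / L0 := lt_of_le_of_lt hDle hw'
      have h4 : (ρ0 / ρ) * dist (Φ v) x < ρ0 := by
        rwa [div_lt_div_iff_of_pos_right hL0'] at h3
      have h5 : dist (Φ v) x < ρ := by
        by_contra hcon
        push_neg at hcon
        have : (ρ0 / ρ) * ρ ≤ (ρ0 / ρ) * dist (Φ v) x :=
          mul_le_mul_of_nonneg_left hcon hratio.le
        rw [div_mul_cancel₀ _ (ne_of_gt hρ)] at this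
        linarith
      exact Metric.mem_ball.2 h5
    refine ⟨Φ v, hball, ?_⟩
    -- Ψ (Φ v) = w
    set u : ∀ n, X n := p (Φ v) with hudef
    have huv : Filter.Tendsto (fun n => dist (u n) (v n)) ↑ω (nhds 0) := by
      have := hdist u v
      rw [hudef, hp, dist_self] at this
      exact this
    have hu : ∀ᶠ n in (ω : Filter ℕ), u n ∈ Metric.ball (p x n) ρ := ballmem _ hball
    have h6 : Filter.Tendsto (fun n => dist (Φn n (u n)) (p w n)) ↑ω
        (nhds (dist (Ψ (Φ v)) w)) := by
      have := hdist (fun n => Φn n (u n)) (p w); rwa [hp] at this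
    have h7 : Filter.Tendsto (fun n => L0 * ((ρ0 / ρ) * dist (u n) (v n))) ↑ω (nhds 0) := by
      have := (huv.const_mul (ρ0 / ρ)).const_mul L0
      simpa using this
    have hle : dist (Ψ (Φ v)) w ≤ 0 := by
      refine le_of_tendsto_of_tendsto h6 h7 ?_
      refine (hu.and hv).mono fun n hn => ?_
      have := ((hΦn n).1 _ hn.1 _ hn.2.1).2
      rwa [hn.2.2] at this
    have : dist (Ψ (Φ v)) w = 0 := le_antisymm hle dist_nonneg
    exact dist_eq_zero.1 this
end

section
/- Uniform doubling along a Gromov-Hausdorff convergent sequence: let $(X_n,d_n)$ be compact $(L_0,\rho_0)$-quasi-selfsimilar metric spaces converging in the Gromov-Hausdorff sense to a compact space $(X_\infty, d_\infty)$. Then there exists $D_0 \geq 0$ such that $X_n$ is $D_0$-doubling for every $n$. -/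
/-!
For a fixed scale `s > 0`, the `s`-packing number of a compact space is finite, and a
Gromov-Hausdorff `s/4`-approximation sends `s`-separated sets injectively onto `s/2`-separated
ones; so along a GH-convergent sequence the `s`-packing numbers are uniformly bounded.
Quasi-selfsimilarity turns a `ρ/2`-separated subset of a ball of radius `ρ ≤ ρ0` into a
`ρ0/(2L0)`-separated set, so the packing bound at the single scale `s = ρ0/(2L0)` bounds the
doubling constant at every scale.
-/

open Filter Metric Set Topology
open scoped ENNReal NNReal

theorem ofReal_lt_edist_iff {X : Type*} [PseudoMetricSpace X] {r : ℝ} (hr : 0 ≤ r) {a b : X} :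
    ENNReal.ofReal r < edist a b ↔ r < dist a b := by
  rw [edist_dist, ENNReal.ofReal_lt_ofReal_iff']
  exact ⟨And.left, fun h => ⟨h, hr.trans_lt h⟩⟩

namespace Metric

variable {X Y : Type*}

theorem packingNumber_le_of_forall_lt_edist [PseudoEMetricSpace X] [PseudoEMetricSpace Y]
    {f : X → Y} {A : Set X} {B : Set Y} {δ ε : ℝ≥0} (hAB : MapsTo f A B)
    (hf : ∀ a ∈ A, ∀ b ∈ A, (δ : ℝ≥0∞) < edist a b → (ε : ℝ≥0∞) < edist (f a) (f b)) :
    packingNumber δ A ≤ packingNumber ε B := by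
  simp only [packingNumber, iSup_le_iff]
  intro C hCA hC
  have hC' : C.Pairwise fun a b => (ε : ℝ≥0∞) < edist (f a) (f b) :=
    fun a ha b hb hab => hf a (hCA ha) b (hCA hb) (hC ha hb hab)
  have hinj : InjOn f C := fun a ha b hb hab => by
    by_contra hne
    simpa [hab] using hC' ha hb hne
  rw [← hinj.encard_image]
  exact IsSeparated.encard_le_packingNumber (image_subset_iff.2 (hCA.trans hAB.subset_preimage))
    (hinj.pairwise_image.2 hC')

theorem packingNumber_toNNReal_le_of_forall_lt_dist [PseudoMetricSpace X] [PseudoMetricSpace Y]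
    {f : X → Y} {A : Set X} {B : Set Y} {δ ε : ℝ} (hε : 0 ≤ ε) (hAB : MapsTo f A B)
    (hf : ∀ a ∈ A, ∀ b ∈ A, δ < dist a b → ε < dist (f a) (f b)) :
    packingNumber δ.toNNReal A ≤ packingNumber ε.toNNReal B :=
  packingNumber_le_of_forall_lt_edist hAB fun a ha b hb hab =>
    have hab' : δ < dist a b := by
      rw [edist_dist] at hab
      exact (ENNReal.ofReal_lt_ofReal_iff'.1 hab).1
    (ofReal_lt_edist_iff hε).2 (hf a ha b hb hab')

theorem packingNumber_univ_ne_top [PseudoEMetricSpace X] [CompactSpace X] {ε : ℝ≥0}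
    (hε : ε ≠ 0) : packingNumber ε (univ : Set X) ≠ ⊤ := by
  obtain ⟨N, -, hN, hcover⟩ :=
    exists_finite_isCover_of_isCompact (ε := ε / 2) (by simpa using hε) (isCompact_univ (X := X))
  have h2 : 2 * (ε / 2) = ε := mul_div_cancel₀ ε two_ne_zero
  refine ne_top_of_le_ne_top hN.encard_lt_top.ne ?_
  calc packingNumber ε (univ : Set X) = packingNumber (2 * (ε / 2)) univ := by rw [h2]
    _ ≤ externalCoveringNumber (ε / 2) univ := packingNumber_two_mul_le_externalCoveringNumber _ _
    _ ≤ N.encard := hcover.externalCoveringNumber_le_encard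

end Metric

theorem ENat.exists_forall_le_of_eventually_le {u : ℕ → ℕ∞} {c : ℕ∞} (hu : ∀ n, u n ≠ ⊤)
    (hc : c ≠ ⊤) (h : ∀ᶠ n in atTop, u n ≤ c) : ∃ K : ℕ, ∀ n, u n ≤ K := by
  obtain ⟨K, hK⟩ := (isBoundedUnder_of_eventually_le
    (h.mono fun n hn => ENat.toNat_le_toNat hn hc)).bddAbove_range
  refine ⟨K, fun n => ?_⟩
  rw [← ENat.natCast_toNat (hu n)]
  exact_mod_cast hK (mem_range_self n)

namespace GromovHausdorff

variable {X Y : Type*} [MetricSpace X] [CompactSpace X] [Nonempty X]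
  [MetricSpace Y] [CompactSpace Y] [Nonempty Y]

theorem exists_dist_lt_dist_add_of_ghDist_lt {δ : ℝ} (h : ghDist X Y < δ) :
    ∃ g : X → Y, ∀ a b, dist a b < dist (g a) (g b) + 2 * δ := by
  obtain ⟨Φ, Ψ, hΦ, hΨ, hΦΨ⟩ := ghDist_eq_hausdorffDist X Y
  have hfin : hausdorffEDist (range Φ) (range Ψ) ≠ ⊤ :=
    hausdorffEDist_ne_top_of_nonempty_of_bounded (range_nonempty Φ) (range_nonempty Ψ)
      (isCompact_range hΦ.continuous).isBounded (isCompact_range hΨ.continuous).isBounded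
  have hclose : ∀ a, ∃ b, dist (Φ a) (Ψ b) < δ := fun a => by
    obtain ⟨-, ⟨b, rfl⟩, hb⟩ :=
      exists_dist_lt_of_hausdorffDist_lt (mem_range_self a) (hΦΨ ▸ h) hfin
    exact ⟨b, hb⟩
  choose g hg using hclose
  refine ⟨g, fun a b => ?_⟩
  calc dist a b = dist (Φ a) (Φ b) := (hΦ.dist_eq a b).symm
    _ ≤ dist (Φ a) (Ψ (g a)) + dist (Ψ (g a)) (Ψ (g b)) + dist (Ψ (g b)) (Φ b) :=
      dist_triangle4 _ _ _ _
    _ < δ + dist (g a) (g b) + δ := by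
      rw [hΨ.dist_eq, dist_comm (Ψ (g b))]
      gcongr <;> apply hg
    _ = dist (g a) (g b) + 2 * δ := by ring

theorem packingNumber_le_of_ghDist_lt {ε δ : ℝ} (hε : 0 ≤ ε) (h : ghDist X Y < δ) :
    packingNumber (ε + 2 * δ).toNNReal (univ : Set X) ≤
      packingNumber ε.toNNReal (univ : Set Y) := by
  obtain ⟨g, hg⟩ := exists_dist_lt_dist_add_of_ghDist_lt h
  refine packingNumber_toNNReal_le_of_forall_lt_dist hε (mapsTo_univ g _)
    fun a _ b _ hab => ?_
  linarith [hg a b]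

theorem exists_forall_packingNumber_le_of_tendsto {X : ℕ → Type*} [∀ n, MetricSpace (X n)]
    [∀ n, CompactSpace (X n)] [∀ n, Nonempty (X n)]
    (hGH : Tendsto (fun n => toGHSpace (X n)) atTop (𝓝 (toGHSpace Y))) {ε : ℝ} (hε : 0 < ε) :
    ∃ K : ℕ, ∀ n, packingNumber ε.toNNReal (univ : Set (X n)) ≤ K := by
  refine ENat.exists_forall_le_of_eventually_le
    (fun n => packingNumber_univ_ne_top (by positivity))
    (packingNumber_univ_ne_top (X := Y) (ε := (ε / 2).toNNReal) (by positivity)) ?_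
  filter_upwards [Metric.tendsto_nhds.1 hGH (ε / 4) (by positivity)] with n hn
  calc packingNumber ε.toNNReal univ = packingNumber (ε / 2 + 2 * (ε / 4)).toNNReal univ := by
        ring_nf
    _ ≤ _ := packingNumber_le_of_ghDist_lt (by positivity) hn

end GromovHausdorff

namespace QSS

variable {X : Type*} [MetricSpace X] {L0 ρ0 : ℝ}

theorem packingNumber_ball_le_packingNumber_univ (hq : QSS X L0 ρ0) (hL0 : 1 ≤ L0)
    (hρ0 : 0 < ρ0) (x : X) {ρ : ℝ} (hρ : 0 < ρ) :
    packingNumber (ρ / 2).toNNReal (ball x ρ) ≤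
      packingNumber (ρ0 / (2 * L0)).toNNReal (univ : Set X) := by
  have hL0' : 0 < L0 := one_pos.trans_le hL0
  rcases le_or_gt ρ ρ0 with hρρ0 | hρ0ρ
  · obtain ⟨Φ, hΦ, -⟩ := hq x ρ hρ hρρ0
    refine packingNumber_toNNReal_le_of_forall_lt_dist (by positivity)
      (mapsTo_univ Φ _) fun a ha b hb hab => ?_
    calc ρ0 / (2 * L0) = ρ0 / ρ * (ρ / 2) / L0 := by field_simp
      _ < ρ0 / ρ * dist a b / L0 := by gcongr
      _ ≤ dist (Φ a) (Φ b) := (hΦ a ha b hb).1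
  · refine packingNumber_toNNReal_le_of_forall_lt_dist (by positivity)
      (mapsTo_univ id _) fun a _ b _ hab => ?_
    calc ρ0 / (2 * L0) ≤ ρ0 / 2 := div_le_div_of_nonneg_left hρ0.le two_pos (by linarith)
      _ < ρ / 2 := by linarith
      _ < dist a b := hab

theorem doubling_of_packingNumber_univ_le (hq : QSS X L0 ρ0) (hL0 : 1 ≤ L0) (hρ0 : 0 < ρ0)
    {D : ℕ} (hD : packingNumber (ρ0 / (2 * L0)).toNNReal (univ : Set X) ≤ D) : Doubling X D := by
  intro x ρ S hS hsep
  rcases le_or_gt ρ 0 with hρ | hρ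
  · have hS0 : (S : Set X) = ∅ := subset_empty_iff.1 (hS.trans (ball_eq_empty.2 hρ).subset)
    simp [Finset.coe_eq_empty.1 hS0]
  have hSsep : IsSeparated (ρ / 2).toNNReal (S : Set X) := fun a ha b hb hab =>
    (ofReal_lt_edist_iff (by positivity)).2 (hsep a ha b hb hab)
  have hcard : (S.card : ℕ∞) ≤ D :=
    calc (S.card : ℕ∞) = (S : Set X).encard := (encard_coe_eq_coe_finsetCard S).symm
      _ ≤ packingNumber (ρ / 2).toNNReal (ball x ρ) := hSsep.encard_le_packingNumber hS
      _ ≤ packingNumber (ρ0 / (2 * L0)).toNNReal univ :=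
        packingNumber_ball_le_packingNumber_univ hq hL0 hρ0 x hρ
      _ ≤ D := hD
  exact_mod_cast hcard

end QSS

/-- Uniform doubling along a Gromov-Hausdorff convergent sequence of compact
`(L0,ρ0)`-quasi-selfsimilar spaces: there is `D0` such that every `X n` is `D0`-doubling. -/
theorem qss_GH_convergent_uniform_doubling (L0 ρ0 : ℝ) (hL0 : 1 ≤ L0) (hρ0 : 0 < ρ0)
    (X : ℕ → Type) [∀ n, MetricSpace (X n)] [∀ n, CompactSpace (X n)] [∀ n, Nonempty (X n)]
    (Y : Type) [MetricSpace Y] [CompactSpace Y] [Nonempty Y]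
    (hqss : ∀ n, QSS (X n) L0 ρ0)
    (hGH : Filter.Tendsto (fun n => GromovHausdorff.toGHSpace (X n)) Filter.atTop
      (nhds (GromovHausdorff.toGHSpace Y))) :
    ∃ D0 : ℕ, ∀ n, Doubling (X n) D0 := by
  obtain ⟨K, hK⟩ := GromovHausdorff.exists_forall_packingNumber_le_of_tendsto hGH
    (ε := ρ0 / (2 * L0)) (by positivity)
  exact ⟨K, fun n => QSS.doubling_of_packingNumber_univ_le (hqss n) hL0 hρ0 (hK n)⟩
end
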